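/- Every infinite-dimensional normed space X contains an infinite-dimensional closed subspace Y possessing a Schauder basis (xₙ) whose canonical projections Pₙ are bounded linear operators on Y with supₙ ‖Pₙ‖ < ∞. -/

import Mathlib

open Filter Topology

variable (𝕜 : Type*) [RCLike 𝕜]
variable {X : Type*} [NormedAddCommGroup X] [NormedSpace 𝕜 X]

/-- The `n`-th partial sum `∑_{i<n} aᵢ • xᵢ` of the expansion with coefficients `a`. -/
noncomputable def partialSum (x : ℕ → X) (a : ℕ → 𝕜) (n : ℕ) : X :=
  ∑ i ∈ Finset.range n, a i • x i

/-- `v` has the expansion `v = ∑ᵢ aᵢ xᵢ` (ordered convergence of partial sums). -/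
def Expands (x : ℕ → X) (a : ℕ → 𝕜) (v : X) : Prop :=
  Filter.Tendsto (partialSum 𝕜 x a) Filter.atTop (nhds v)

/-- `(xₙ)` is a Schauder basis of `X`: every vector has a unique expansion. -/
def IsSchauderBasis (x : ℕ → X) : Prop :=
  ∀ v : X, ∃! a : ℕ → 𝕜, Expands 𝕜 x a v

/-- `(xₙ)` is an essential Schauder basis of `X`: a Schauder basis for which the canonical
map `T : L_X → X` is an isomorphism; equivalently (since `‖T‖ ≤ 1` always holds), there is
`C > 0` bounding `η(a) = supₙ ‖∑_{i<n} aᵢxᵢ‖ ≤ C‖v‖` for every expansion `v = ∑ aᵢxᵢ`,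
i.e. `‖T⁻¹‖ ≤ C`. -/
def IsEssentialBasis (x : ℕ → X) : Prop :=
  IsSchauderBasis 𝕜 x ∧
    ∃ C > 0, ∀ (a : ℕ → 𝕜) (v : X), Expands 𝕜 x a v →
      ∀ n, ‖partialSum 𝕜 x a n‖ ≤ C * ‖v‖

/-- `(xₙ)` is an essential basic sequence: an essential Schauder basis of the closure of
its linear span. -/
def IsEssentialBasicSeq (x : ℕ → X) : Prop :=
  (∀ v ∈ closure (Submodule.span 𝕜 (Set.range x) : Set X),
      ∃! a : ℕ → 𝕜, Expands 𝕜 x a v) ∧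
    ∃ C > 0, ∀ (a : ℕ → 𝕜) (v : X), Expands 𝕜 x a v →
      ∀ n, ‖partialSum 𝕜 x a n‖ ≤ C * ‖v‖

/-- The Grunblum condition with constant `M`. -/
def Grunblum (x : ℕ → X) (M : ℝ) : Prop :=
  ∀ (a : ℕ → 𝕜) (m n : ℕ), m ≤ n →
    ‖partialSum 𝕜 x a m‖ ≤ M * ‖partialSum 𝕜 x a n‖

/-!
Mazur's construction. For a finite-dimensional subspace `F` of an infinite-dimensional normed
space and `K > 1`, finitely many functionals of norm at most one almost norm `F`, and a unit
vector `u` in the intersection of their kernels satisfies `‖y‖ ≤ K ‖y + c • u‖` for `y ∈ F`.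
Choosing `xₙ` this way for `F = span {x₀, …, xₙ₋₁}` with `K = wₙ₊₁ / wₙ` for an increasing weight
`1 ≤ wₙ ≤ 2` makes `n ↦ wₙ ‖Sₙ a‖` monotone for every coefficient sequence `a`, which is Grunblum's
condition `‖Sₘ a‖ ≤ 2 ‖Sₙ a‖` for `m ≤ n`. That condition bounds the partial sums and the
coefficients of an expansion by the expanded vector; hence expansions are unique, and for vectors
of the span converging to `v` the coefficients converge and the partial sums converge uniformly,
so the limit coefficients expand `v`.
-/

theorem CauchySeq.of_dist_le_mul {α β : Type*} [PseudoMetricSpace α] [PseudoMetricSpace β]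
    {f : ℕ → α} {g : ℕ → β} {C : ℝ} (hC : 0 ≤ C) (hg : CauchySeq g)
    (h : ∀ k j, dist (f k) (f j) ≤ C * dist (g k) (g j)) : CauchySeq f := by
  obtain ⟨b, -, hb, hb0⟩ := cauchySeq_iff_le_tendsto_0.1 hg
  refine cauchySeq_of_le_tendsto_0 (fun N => C * b N)
    (fun k j N hk hj => (h k j).trans (mul_le_mul_of_nonneg_left (hb k j N hk hj) hC)) ?_
  simpa using hb0.const_mul C

theorem Submodule.not_finiteDimensional_topologicalClosure_span {K V ι : Type*} [Field K]
    [AddCommGroup V] [Module K V] [TopologicalSpace V] [ContinuousAdd V] [ContinuousConstSMul K V]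
    [Infinite ι] {x : ι → V} (hx : LinearIndependent K x) :
    ¬ FiniteDimensional K (Submodule.span K (Set.range x)).topologicalClosure := by
  intro h
  have : FiniteDimensional K (Submodule.span K (Set.range x)) :=
    Submodule.finiteDimensional_of_le (Submodule.le_topologicalClosure _)
  have := (linearIndependent_span hx).finite
  exact not_finite ι

section Mazur

variable {𝕜}

theorem exists_finset_strongDual_norming (F : Submodule 𝕜 X) [FiniteDimensional 𝕜 F] {r : ℝ}
    (hr : r < 1) :
    ∃ s : Finset (StrongDual 𝕜 X), (∀ f ∈ s, ‖f‖ ≤ 1) ∧ ∀ y ∈ F, ∃ f ∈ s, r * ‖y‖ ≤ ‖f y‖ := by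
  classical
  have : ProperSpace F := FiniteDimensional.proper 𝕜 F
  choose g hg_norm hg_apply using fun z : X => exists_dual_vector'' 𝕜 z
  set S : Set X := Subtype.val '' Metric.sphere (0 : F) 1
  have hS_norm : ∀ z ∈ S, ‖z‖ = 1 := by
    rintro _ ⟨z, hz, rfl⟩
    simpa using hz
  have hS : IsCompact S := (isCompact_sphere (0 : F) 1).image continuous_subtype_val
  obtain ⟨t, -, ht, hcover⟩ := hS.elim_finite_subcover_image
    (c := fun z => {w | r < ‖g z w‖}) (fun z _ => isOpen_lt continuous_const (g z).continuous.norm)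
    (fun z hz => Set.mem_biUnion hz (by simp [hg_apply, hS_norm z hz, hr]))
  refine ⟨insert 0 (ht.toFinset.image g), by simpa using fun z _ => hg_norm z, fun y hy => ?_⟩
  rcases eq_or_ne y 0 with rfl | hy0
  · exact ⟨0, Finset.mem_insert_self _ _, by simp⟩
  have hy_pos : 0 < ‖y‖ := norm_pos_iff.2 hy0
  have hyS : ((‖y‖⁻¹ : ℝ) : 𝕜) • y ∈ S :=
    ⟨⟨_, F.smul_mem _ hy⟩, by simp [norm_smul, hy_pos.ne'], rfl⟩
  obtain ⟨z, hzt, hz⟩ := Set.mem_iUnion₂.1 (hcover hyS)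
  refine ⟨g z, Finset.mem_insert_of_mem (by simpa using ⟨z, hzt, rfl⟩), ?_⟩
  simp only [Set.mem_ofPred_eq, map_smul, norm_smul, RCLike.norm_ofReal, abs_inv, abs_norm] at hz
  rw [lt_inv_mul_iff₀ hy_pos, mul_comm] at hz
  exact hz.le

theorem exists_ne_zero_forall_mem_apply_eq_zero (hX : ¬ FiniteDimensional 𝕜 X)
    (s : Finset (StrongDual 𝕜 X)) : ∃ u : X, u ≠ 0 ∧ ∀ f ∈ s, f u = 0 := by
  by_contra! h
  have hinj :
      Function.Injective (LinearMap.pi fun f : s => ((f : StrongDual 𝕜 X) : X →ₗ[𝕜] 𝕜)) := by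
    rw [← LinearMap.ker_eq_bot, LinearMap.ker_eq_bot']
    intro u hu
    by_contra hu0
    obtain ⟨f, hf, hfu⟩ := h u hu0
    exact hfu (congrFun hu ⟨f, hf⟩)
  exact hX (Module.Finite.of_injective _ hinj)

theorem exists_norm_eq_one_forall_norm_le_mul_norm_add_smul (hX : ¬ FiniteDimensional 𝕜 X)
    (F : Submodule 𝕜 X) [FiniteDimensional 𝕜 F] {K : ℝ} (hK : 1 < K) :
    ∃ u : X, ‖u‖ = 1 ∧ ∀ y ∈ F, ∀ c : 𝕜, ‖y‖ ≤ K * ‖y + c • u‖ := by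
  obtain ⟨s, hs_norm, hs⟩ := exists_finset_strongDual_norming F (inv_lt_one_of_one_lt₀ hK)
  obtain ⟨u₀, hu₀, hker⟩ := exists_ne_zero_forall_mem_apply_eq_zero hX s
  set u : X := ((‖u₀‖⁻¹ : ℝ) : 𝕜) • u₀
  refine ⟨u, by simp [u, norm_smul, hu₀], fun y hy c => ?_⟩
  obtain ⟨f, hf, hfy⟩ := hs y hy
  have hfu : f (y + c • u) = f y := by simp [u, hker f hf]
  calc ‖y‖ = K * (K⁻¹ * ‖y‖) := by field_simp
    _ ≤ K * ‖f (y + c • u)‖ := by rw [hfu]; gcongr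
    _ ≤ K * ‖y + c • u‖ := by
      gcongr
      exact (f.le_opNorm _).trans (mul_le_of_le_one_left (norm_nonneg _) (hs_norm f hf))

end Mazur

section BasicSequence

variable {𝕜} {x : ℕ → X} {M : ℝ} {a b : ℕ → 𝕜} {v w : X}

theorem partialSum_succ (x : ℕ → X) (a : ℕ → 𝕜) (n : ℕ) :
    partialSum 𝕜 x a (n + 1) = partialSum 𝕜 x a n + a n • x n :=
  Finset.sum_range_succ _ _

theorem partialSum_sub (x : ℕ → X) (a b : ℕ → 𝕜) :
    partialSum 𝕜 x (a - b) = partialSum 𝕜 x a - partialSum 𝕜 x b := by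
  ext n
  simp [partialSum, sub_smul]

theorem partialSum_mem_span (x : ℕ → X) (a : ℕ → 𝕜) (n : ℕ) :
    partialSum 𝕜 x a n ∈ Submodule.span 𝕜 (Set.range fun i : Fin n => x i) :=
  Submodule.sum_mem _ fun i hi =>
    Submodule.smul_mem _ _ (Submodule.subset_span ⟨⟨i, Finset.mem_range.1 hi⟩, rfl⟩)

theorem Expands.sub (ha : Expands 𝕜 x a v) (hb : Expands 𝕜 x b w) :
    Expands 𝕜 x (a - b) (v - w) := by
  rw [Expands, partialSum_sub]
  exact Tendsto.sub ha hb

theorem expands_linearCombination (x : ℕ → X) (l : ℕ →₀ 𝕜) :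
    Expands 𝕜 x l (Finsupp.linearCombination 𝕜 x l) := by
  obtain ⟨N, hN⟩ := l.support.exists_nat_subset_range
  refine tendsto_atTop_of_eventually_const (i₀ := N) fun n hn => ?_
  rw [Finsupp.linearCombination_apply, Finsupp.sum_of_support_subset l
    (hN.trans (Finset.range_subset_range.2 hn)) (fun i c => c • x i) fun _ _ => zero_smul 𝕜 _]
  rfl

theorem exists_expands_of_mem_span (hv : v ∈ Submodule.span 𝕜 (Set.range x)) :
    ∃ a : ℕ → 𝕜, Expands 𝕜 x a v := by
  obtain ⟨l, rfl⟩ := Finsupp.mem_span_range_iff_exists_finsupp.1 hv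
  exact ⟨l, expands_linearCombination x l⟩

theorem grunblum_of_monotone_mul_norm_partialSum (w : ℕ → ℝ) (hw_one : ∀ n, 1 ≤ w n)
    (hw_le : ∀ n, w n ≤ M) (hmono : ∀ a, Monotone fun n => w n * ‖partialSum 𝕜 x a n‖) :
    Grunblum 𝕜 x M := fun a m n hmn =>
  calc ‖partialSum 𝕜 x a m‖ ≤ w m * ‖partialSum 𝕜 x a m‖ :=
        le_mul_of_one_le_left (norm_nonneg _) (hw_one m)
    _ ≤ w n * ‖partialSum 𝕜 x a n‖ := hmono a hmn
    _ ≤ M * ‖partialSum 𝕜 x a n‖ := mul_le_mul_of_nonneg_right (hw_le n) (norm_nonneg _)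

namespace Grunblum

theorem one_le (h : Grunblum 𝕜 x M) (hx : x 0 ≠ 0) : 1 ≤ M := by
  have := h (fun _ => 1) 1 1 le_rfl
  simp only [partialSum, Finset.sum_range_one, one_smul] at this
  exact le_of_mul_le_mul_right (by simpa using this) (norm_pos_iff.2 hx)

theorem norm_partialSum_le (h : Grunblum 𝕜 x M) (ha : Expands 𝕜 x a v) (n : ℕ) :
    ‖partialSum 𝕜 x a n‖ ≤ M * ‖v‖ :=
  ge_of_tendsto (ha.norm.const_mul M) (eventually_atTop.2 ⟨n, fun _ hm => h a n _ hm⟩)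

theorem norm_coeff_mul_le (h : Grunblum 𝕜 x M) (ha : Expands 𝕜 x a v) (m : ℕ) :
    ‖a m‖ * ‖x m‖ ≤ 2 * M * ‖v‖ :=
  calc ‖a m‖ * ‖x m‖ = ‖partialSum 𝕜 x a (m + 1) - partialSum 𝕜 x a m‖ := by
        rw [partialSum_succ, add_sub_cancel_left, norm_smul]
    _ ≤ ‖partialSum 𝕜 x a (m + 1)‖ + ‖partialSum 𝕜 x a m‖ := norm_sub_le _ _
    _ ≤ M * ‖v‖ + M * ‖v‖ := add_le_add (h.norm_partialSum_le ha _) (h.norm_partialSum_le ha _)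
    _ = 2 * M * ‖v‖ := by ring

theorem eq_zero_of_expands_zero (h : Grunblum 𝕜 x M) (hx : ∀ n, x n ≠ 0)
    (ha : Expands 𝕜 x a 0) : a = 0 := by
  ext m
  have := h.norm_coeff_mul_le ha m
  rw [norm_zero, mul_zero] at this
  exact norm_le_zero_iff.1 (nonpos_of_mul_nonpos_left this (norm_pos_iff.2 (hx m)))

theorem expands_unique (h : Grunblum 𝕜 x M) (hx : ∀ n, x n ≠ 0) (ha : Expands 𝕜 x a v)
    (hb : Expands 𝕜 x b v) : a = b :=
  sub_eq_zero.1 (h.eq_zero_of_expands_zero hx (by simpa using ha.sub hb))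

theorem linearIndependent (h : Grunblum 𝕜 x M) (hx : ∀ n, x n ≠ 0) : LinearIndependent 𝕜 x :=
  linearIndependent_iff.2 fun l hl =>
    DFunLike.coe_injective (h.eq_zero_of_expands_zero hx (hl ▸ expands_linearCombination x l))

theorem exists_expands (h : Grunblum 𝕜 x M) (hx : ∀ n, x n ≠ 0)
    (hv : v ∈ closure (Submodule.span 𝕜 (Set.range x) : Set X)) :
    ∃ a : ℕ → 𝕜, Expands 𝕜 x a v := by
  obtain ⟨u, hu, hlim⟩ := mem_closure_iff_seq_limit.1 hv
  choose b hb using fun k => exists_expands_of_mem_span (hu k)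
  have hM : 0 ≤ M := zero_le_one.trans (h.one_le (hx 0))
  have hcoeff : ∀ m, CauchySeq fun k => b k m := fun m =>
    hlim.cauchySeq.of_dist_le_mul (C := 2 * M / ‖x m‖) (by positivity) fun k j => by
      rw [dist_eq_norm, dist_eq_norm, div_mul_eq_mul_div, le_div_iff₀ (norm_pos_iff.2 (hx m))]
      exact h.norm_coeff_mul_le ((hb k).sub (hb j)) m
  choose a ha using fun m => cauchySeq_tendsto_of_complete (hcoeff m)
  have hpartial : ∀ m, Tendsto (fun k => partialSum 𝕜 x (b k) m) atTop
      (𝓝 (partialSum 𝕜 x a m)) := fun m =>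
    tendsto_finsetSum _ fun i _ => (ha i).smul_const (x i)
  -- letting `j → ∞` in `‖Sₘ (b j) - Sₘ (b k)‖ ≤ M ‖u j - u k‖`
  have hclose : ∀ k m, dist (partialSum 𝕜 x a m) (partialSum 𝕜 x (b k) m) ≤ M * dist v (u k) :=
    fun k m => le_of_tendsto_of_tendsto' ((hpartial m).dist tendsto_const_nhds)
      ((hlim.dist tendsto_const_nhds).const_mul M) fun j => by
        rw [dist_eq_norm, dist_eq_norm, ← Pi.sub_apply _ _ m, ← partialSum_sub]
        exact h.norm_partialSum_le ((hb j).sub (hb k)) m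
  have hunif : TendstoUniformly (fun k => partialSum 𝕜 x (b k)) (partialSum 𝕜 x a) atTop := by
    rw [Metric.tendstoUniformly_iff]
    intro ε hε
    have : Tendsto (fun k => M * dist v (u k)) atTop (𝓝 0) := by
      simpa using ((tendsto_const_nhds (x := v)).dist hlim).const_mul M
    filter_upwards [this.eventually (gt_mem_nhds hε)] with k hk m
    exact (hclose k m).trans_lt hk
  exact ⟨a, hunif.tendsto_of_eventually_tendsto (.of_forall hb) hlim⟩

theorem isEssentialBasicSeq (h : Grunblum 𝕜 x M) (hx : ∀ n, x n ≠ 0) :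
    IsEssentialBasicSeq 𝕜 x :=
  ⟨fun _ hv => (h.exists_expands hx hv).elim fun a ha =>
      ⟨a, ha, fun _ hb => h.expands_unique hx hb ha⟩,
    M, zero_lt_one.trans_le (h.one_le (hx 0)), fun _ _ ha n => h.norm_partialSum_le ha n⟩

end Grunblum

end BasicSequence

section MazurSeq

variable {𝕜}

noncomputable def mazurWeight (n : ℕ) : ℝ := 2 - 2⁻¹ ^ n

theorem mazurWeight_strictMono : StrictMono mazurWeight := fun m n hmn => by
  have := pow_lt_pow_right_of_lt_one₀ (by norm_num : (0 : ℝ) < 2⁻¹) (by norm_num) hmn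
  simp only [mazurWeight]
  linarith

theorem one_le_mazurWeight (n : ℕ) : 1 ≤ mazurWeight n := by
  have := pow_le_one₀ (n := n) (by norm_num : (0 : ℝ) ≤ 2⁻¹) (by norm_num)
  simp only [mazurWeight]
  linarith

theorem mazurWeight_le_two (n : ℕ) : mazurWeight n ≤ 2 := by
  have := pow_nonneg (by norm_num : (0 : ℝ) ≤ 2⁻¹) n
  simp only [mazurWeight]
  linarith

theorem one_lt_mazurWeight_succ_div (n : ℕ) : 1 < mazurWeight (n + 1) / mazurWeight n :=
  (one_lt_div (zero_lt_one.trans_le (one_le_mazurWeight n))).2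
    (mazurWeight_strictMono n.lt_succ_self)

noncomputable def mazurSeq (hX : ¬ FiniteDimensional 𝕜 X) : ℕ → X
  | n =>
    have : FiniteDimensional 𝕜 (Submodule.span 𝕜 (Set.range fun i : Fin n => mazurSeq hX i)) :=
      FiniteDimensional.span_of_finite 𝕜 (Set.finite_range _)
    (exists_norm_eq_one_forall_norm_le_mul_norm_add_smul hX
      (Submodule.span 𝕜 (Set.range fun i : Fin n => mazurSeq hX i))
      (one_lt_mazurWeight_succ_div n)).choose
termination_by n => n
decreasing_by all_goals exact i.isLt

variable (hX : ¬ FiniteDimensional 𝕜 X)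

theorem mazurSeq_spec (n : ℕ) :
    ‖mazurSeq hX n‖ = 1 ∧
      ∀ y ∈ Submodule.span 𝕜 (Set.range fun i : Fin n => mazurSeq hX i), ∀ c : 𝕜,
        ‖y‖ ≤ mazurWeight (n + 1) / mazurWeight n * ‖y + c • mazurSeq hX n‖ := by
  have : FiniteDimensional 𝕜 (Submodule.span 𝕜 (Set.range fun i : Fin n => mazurSeq hX i)) :=
    FiniteDimensional.span_of_finite 𝕜 (Set.finite_range _)
  rw [mazurSeq]
  exact (exists_norm_eq_one_forall_norm_le_mul_norm_add_smul hX
    (Submodule.span 𝕜 (Set.range fun i : Fin n => mazurSeq hX i))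
    (one_lt_mazurWeight_succ_div n)).choose_spec

theorem mazurSeq_ne_zero (n : ℕ) : mazurSeq hX n ≠ 0 :=
  norm_ne_zero_iff.1 (by simp [(mazurSeq_spec hX n).1])

theorem grunblum_mazurSeq : Grunblum 𝕜 (mazurSeq hX) 2 := by
  refine grunblum_of_monotone_mul_norm_partialSum mazurWeight one_le_mazurWeight
    mazurWeight_le_two fun a => monotone_nat_of_le_succ fun n => ?_
  have hw : 0 < mazurWeight n := zero_lt_one.trans_le (one_le_mazurWeight n)
  have := (mazurSeq_spec hX n).2 _ (partialSum_mem_span _ a n) (a n)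
  rw [← partialSum_succ, div_mul_eq_mul_div, le_div_iff₀ hw] at this
  simpa only [mul_comm] using this

end MazurSeq

/-- every infinite-dimensional normed space contains an infinite-dimensional
closed subspace with a Schauder basis whose canonical projections are uniformly bounded. -/
theorem stmt15 (hX : ¬ FiniteDimensional 𝕜 X) :
    ∃ x : ℕ → X,
      (∀ v ∈ closure (Submodule.span 𝕜 (Set.range x) : Set X),
          ∃! a : ℕ → 𝕜, Expands 𝕜 x a v) ∧
      ¬ FiniteDimensional 𝕜 (Submodule.span 𝕜 (Set.range x)).topologicalClosure ∧
      ∃ C > 0, ∀ (a : ℕ → 𝕜) (v : X), Expands 𝕜 x a v →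
        ∀ n, ‖partialSum 𝕜 x a n‖ ≤ C * ‖v‖ := by
  have hG := grunblum_mazurSeq hX
  have hx := mazurSeq_ne_zero hX
  obtain ⟨hexpands, hbound⟩ := hG.isEssentialBasicSeq hx
  exact ⟨mazurSeq hX, hexpands,
    Submodule.not_finiteDimensional_topologicalClosure_span (hG.linearIndependent hx), hbound⟩
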